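/- Let n_0 ∈ O9 and P̃_{n_0} = { ν ∈ N : ⟨ν, f_n⟩ = 0 for all n ∈ O9\{n_0} }. Then P̃_{n_0} = Π̃ ⊕ span_Z{f_{n_0}}, where Π̃ = { ν ∈ N : ⟨ν, f_n⟩ = 0 for all n ∈ O9 }. -/

import Mathlib

def indic (s : Finset ℕ) : Fin 24 → ZMod 2 := fun i => if (i : ℕ) + 1 ∈ s then 1 else 0

def golayBasisSets : Fin 12 → Finset ℕ :=
  ![{1,2,16,18,5,12,22,3}, {7,4,19,10,12,15,8,16}, {23,3,9,19,13,18,8,11},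
    {6,3,22,4,21,17,15,9}, {20,10,11,17,14,13,22,12}, {24,2,10,19,9,5,14,21},
    {8,7,15,17,11,23,18,16}, {16,1,2,21,4,7,8,18}, {18,1,16,8,23,13,14,5},
    {8,7,15,9,19,23,4,22,13,18,1,16}, {18,23,13,22,3,1,11,10,2,16,7,8},
    {16,1,2,10,12,7,5,9,15,8,23,18}]

def golayCode : Submodule (ZMod 2) (Fin 24 → ZMod 2) :=
  Submodule.span (ZMod 2) (Set.range fun i => indic (golayBasisSets i))

/-- The ambient 24-dimensional rational quadratic space. -/
abbrev V24 := Fin 24 → ℚ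

/-- The bilinear form on `V24` for which the standard basis vectors have norm 2. -/
def B24 (u v : V24) : ℚ := 2 * ∑ i, u i * v i

/-- The generators `f_n` of the root sublattice `R` of type `A₁²⁴`. -/
def f24 (n : Fin 24) : V24 := fun i => if i = n then 1 else 0

/-- The Niemeier lattice `N` of type `A₁²⁴`:
`N = { v ∈ (1/2)R : (v mod R) ∈ 𝒢₂₄ }`. -/
def NSet : Set V24 :=
  { v | ∃ w : Fin 24 → ℤ, (∀ i, v i = (w i : ℚ) / 2) ∧
      (fun i => ((w i : ZMod 2))) ∈ golayCode }


/-- The weight of a vector in `𝔽₂²⁴`: the number of nonzero coordinates. -/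
def weight (v : Fin 24 → ZMod 2) : ℕ := (Finset.univ.filter fun i => v i ≠ 0).card

/-- The special octad `𝒪₉ = {3,5,6,9,15,19,23,24}` (as a set of labels in `{1,…,24}`). -/
def O9 : Finset ℕ := {3, 5, 6, 9, 15, 19, 23, 24}

/-- `Π̃ = { ν ∈ N : ⟨ν, f_n⟩ = 0 for all n ∈ 𝒪₉ }`. -/
def PiTilde : Set V24 :=
  { ν | ν ∈ NSet ∧ ∀ n : Fin 24, (n : ℕ) + 1 ∈ O9 → B24 ν (f24 n) = 0 }

/-- `K̃ = { ν ∈ N : ⟨ν, f_n⟩ = 0 for all n ∉ 𝒪₉ }`. -/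
def KTilde : Set V24 :=
  { ν | ν ∈ NSet ∧ ∀ n : Fin 24, (n : ℕ) + 1 ∉ O9 → B24 ν (f24 n) = 0 }


/-! Inside `P̃_{n₀}` a vector `ν = w/2` has `w` vanishing on `𝒪₉ \ {n₀}`. Its Golay codeword
`w mod 2` meets the octad `𝒪₉` evenly, so `w n₀` is even and `ν n₀ = m` is an integer. Then
`ν - m f_{n₀}` still lies in `N` (the codeword is unchanged) and is orthogonal to all of `𝒪₉`. -/

lemma B24_f24 (ν : V24) (n : Fin 24) : B24 ν (f24 n) = 2 * ν n := by
  simp [B24, f24, mul_ite]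

lemma B24_f24_eq_zero_iff {ν : V24} {n : Fin 24} : B24 ν (f24 n) = 0 ↔ ν n = 0 := by
  simp [B24_f24]

lemma sum_O9_eq_zero_of_mem_golayCode {c : Fin 24 → ZMod 2} (hc : c ∈ golayCode) :
    ∑ i : Fin 24 with i.val + 1 ∈ O9, c i = 0 := by
  induction hc using Submodule.span_induction with
  | mem x hx =>
    obtain ⟨i, rfl⟩ := hx
    fin_cases i <;> decide
  | zero => simp
  | add x y _ _ hx hy => simp only [Pi.add_apply, Finset.sum_add_distrib, hx, hy, add_zero]
  | smul a x _ hx => simp [← Finset.mul_sum, hx]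

lemma golayCode_apply_eq_zero_of_vanishing_on_O9_erase {c : Fin 24 → ZMod 2}
    (hc : c ∈ golayCode) {n₀ : Fin 24} (hn₀ : (n₀ : ℕ) + 1 ∈ O9)
    (hvan : ∀ n : Fin 24, (n : ℕ) + 1 ∈ O9 → n ≠ n₀ → c n = 0) : c n₀ = 0 := by
  rw [← sum_O9_eq_zero_of_mem_golayCode hc, Finset.sum_eq_single_of_mem n₀ (by simpa using hn₀)]
  intro n hn hne
  exact hvan n (Finset.mem_filter.mp hn).2 hne

lemma add_intCast_smul_f24_mem_NSet {ν : V24} (hν : ν ∈ NSet) (m : ℤ) (n : Fin 24) :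
    ν + (m : ℚ) • f24 n ∈ NSet := by
  obtain ⟨w, hw, hwc⟩ := hν
  refine ⟨w + Pi.single n (2 * m), fun i => ?_, ?_⟩
  · by_cases h : i = n
    · subst h; simp [hw, f24]; ring
    · simp [hw, f24, h]
  · convert hwc using 1
    funext i
    by_cases h : i = n
    · subst h; simp [show (2 : ZMod 2) = 0 from rfl]
    · simp [h]

lemma exists_intCast_eq_of_mem_NSet {ν : V24} (hν : ν ∈ NSet) {n₀ : Fin 24}
    (hn₀ : (n₀ : ℕ) + 1 ∈ O9) (hvan : ∀ n : Fin 24, (n : ℕ) + 1 ∈ O9 → n ≠ n₀ → ν n = 0) :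
    ∃ m : ℤ, ν n₀ = m := by
  obtain ⟨w, hw, hwc⟩ := hν
  have hw_even : ((w n₀ : ℤ) : ZMod 2) = 0 := by
    refine golayCode_apply_eq_zero_of_vanishing_on_O9_erase hwc hn₀ fun n hn hne => ?_
    have : (w n : ℚ) = 0 := by linarith [hw n, hvan n hn hne]
    simp [show w n = 0 by exact_mod_cast this]
  obtain ⟨m, hm⟩ := (ZMod.intCast_zmod_eq_zero_iff_dvd _ 2).mp hw_even
  exact ⟨m, by rw [hw, hm]; push_cast; ring⟩

/-- For `n₀ ∈ 𝒪₉`, the sublattice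
`P̃_{n₀} = { ν ∈ N : ⟨ν, f_n⟩ = 0 for all n ∈ 𝒪₉ \ {n₀} }` is the (direct, orthogonal)
sum `Π̃ ⊕ span_ℤ{f_{n₀}}`, where `Π̃ = { ν ∈ N : ⟨ν, f_n⟩ = 0 for all n ∈ 𝒪₉ }`. -/
theorem pTilde_n0_splits (n₀ : Fin 24) (hn₀ : (n₀ : ℕ) + 1 ∈ O9) :
    ({ ν | ν ∈ NSet ∧ ∀ n : Fin 24, ((n : ℕ) + 1 ∈ O9 ∧ n ≠ n₀) → B24 ν (f24 n) = 0 }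
        = { v | ∃ p ∈ PiTilde, ∃ m : ℤ, v = p + (m : ℚ) • f24 n₀ }) ∧
    (∀ p ∈ PiTilde, ∀ m : ℤ, p + (m : ℚ) • f24 n₀ = 0 → p = 0 ∧ m = 0) := by
  simp only [PiTilde, B24_f24_eq_zero_iff]
  refine ⟨Set.ext fun ν => ⟨?_, ?_⟩, ?_⟩
  · rintro ⟨hν, hvan⟩
    obtain ⟨m, hm⟩ := exists_intCast_eq_of_mem_NSet hν hn₀ fun n hn hne => hvan n ⟨hn, hne⟩
    refine ⟨ν + ((-m : ℤ) : ℚ) • f24 n₀, ⟨add_intCast_smul_f24_mem_NSet hν _ _, fun n hn => ?_⟩,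
      m, by push_cast; module⟩
    by_cases h : n = n₀
    · subst h; simp [f24, hm]
    · simp [f24, h, hvan n ⟨hn, h⟩]
  · rintro ⟨p, ⟨hp, hpO9⟩, m, rfl⟩
    exact ⟨add_intCast_smul_f24_mem_NSet hp m n₀, fun n hn => by simp [f24, hn.2, hpO9 n hn.1]⟩
  · intro p ⟨_, hpO9⟩ m h
    have hm : m = 0 := by simpa [f24, hpO9 n₀ hn₀] using congrFun h n₀
    subst hm
    simpa using h
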